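/- Consider the N-dimensional delay difference equation x_i(m+1) = c_i(m)x_i(m-τ) + Σ_{j=1}^N h_{ij}(m, x_m), where each h_{ij} satisfies |h_{ij}(m,α) - h_{ij}(m,β)| ≤ H_{ij}‖α-β‖ with constants H_{ij} ≥ 0, and c_i⁺ := sup_m |c_i(m)| < 1. If 1 - c_i⁺ > Σ_{j=1}^N H_{ij} for every i, then the equation is globally exponentially stable: there exist C > 0 and ζ ∈ (0,1) such that ‖x_m(·,α) - x_m(·,β)‖ ≤ C ζ^m ‖α - β‖ for all initial histories α, β ∈ X^N and all m ≥ 0. -/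

import Mathlib

/-!
Let `z = x - y`. Since `c_i⁺ + Σ_j H_{ij} < 1` for the finitely many `i`, there is `ζ ∈ (0,1)` with
`c_i⁺ + Σ_j H_{ij} ≤ ζ^(1-r)` for all `i`. The recurrence and the Lipschitz bounds give
`|z_i(m+1)| ≤ (c_i⁺ + Σ_j H_{ij}) ‖z_m‖`, because `m - τ` lies in the window `[m+r, m]` of the
history `z_m`. By induction on `k`, `|z_i(k)| ≤ ‖z_0‖ ζ^k` for all `k ≥ r`: the new value
`z_i(m+1)` is bounded by `ζ^(1-r) ‖z_0‖ ζ^(m+r) = ‖z_0‖ ζ^(m+1)`. Taking the sup over the window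
gives `‖z_m‖ ≤ ζ^r ζ^m ‖z_0‖`.
-/

open Finset Filter Topology

def history {ι : Type*} (z : ι → ℤ → ℝ) (r m : ℤ) : ι → Icc r (0 : ℤ) → ℝ :=
  fun i j => z i (m + j)

lemma history_zero {ι : Type*} (z : ι → ℤ → ℝ) (r : ℤ) :
    history z r 0 = fun i (j : Icc r (0 : ℤ)) => z i j := by
  funext i j
  rw [history, zero_add]

section History

variable {ι : Type*} [Fintype ι] {r : ℤ}

lemma abs_le_norm_history (z : ι → ℤ → ℝ) {m k : ℤ} (i : ι) (hk₁ : m + r ≤ k) (hk₂ : k ≤ m) :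
    |z i k| ≤ ‖history z r m‖ := by
  have hmem : k - m ∈ Icc r (0 : ℤ) := mem_Icc.2 ⟨by omega, by omega⟩
  calc |z i k| = ‖history z r m i ⟨k - m, hmem⟩‖ := by simp [history, Real.norm_eq_abs]
    _ ≤ ‖history z r m i‖ := norm_le_pi_norm _ _
    _ ≤ ‖history z r m‖ := norm_le_pi_norm _ _

lemma norm_history_le {z : ι → ℤ → ℝ} {m : ℤ} {K : ℝ} (hK : 0 ≤ K)
    (hz : ∀ i k, m + r ≤ k → k ≤ m → |z i k| ≤ K) : ‖history z r m‖ ≤ K := by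
  refine (pi_norm_le_iff_of_nonneg hK).2 fun i => (pi_norm_le_iff_of_nonneg hK).2 fun j => ?_
  obtain ⟨hj₁, hj₂⟩ := mem_Icc.1 j.2
  exact hz i _ (by omega) (by omega)

variable {z : ι → ℤ → ℝ} {ζ : ℝ}

lemma abs_le_mul_zpow_of_abs_succ_le (hζ₀ : 0 < ζ) (hζ₁ : ζ ≤ 1)
    (hstep : ∀ (m : ℕ) i, |z i (m + 1)| ≤ ζ ^ (1 - r) * ‖history z r m‖) (n : ℕ) :
    ∀ i k, r ≤ k → k ≤ n → |z i k| ≤ ‖history z r 0‖ * ζ ^ k := by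
  set M := ‖history z r 0‖
  induction n with
  | zero =>
    intro i k hrk hk
    calc |z i k| ≤ M := abs_le_norm_history z i (by omega) (by exact_mod_cast hk)
      _ ≤ M * ζ ^ k :=
        le_mul_of_one_le_right (norm_nonneg _) (one_le_zpow_of_nonpos₀ hζ₀ hζ₁ (by exact_mod_cast hk))
  | succ n ih =>
    intro i k hrk hk
    rcases lt_or_eq_of_le hk with hk | rfl
    · exact ih i k hrk (by push_cast at hk; omega)
    have hwindow : ‖history z r n‖ ≤ M * ζ ^ ((n : ℤ) + r) := by
      refine norm_history_le (by positivity) fun i' k' hk₁ hk₂ => ?_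
      calc |z i' k'| ≤ M * ζ ^ k' := ih i' k' (by omega) hk₂
        _ ≤ M * ζ ^ ((n : ℤ) + r) :=
          mul_le_mul_of_nonneg_left (zpow_le_zpow_right_of_le_one₀ hζ₀ hζ₁ hk₁) (norm_nonneg _)
    calc |z i ((n + 1 : ℕ) : ℤ)| ≤ ζ ^ (1 - r) * ‖history z r n‖ := by exact_mod_cast hstep n i
      _ ≤ ζ ^ (1 - r) * (M * ζ ^ ((n : ℤ) + r)) :=
        mul_le_mul_of_nonneg_left hwindow (zpow_pos hζ₀ _).le
      _ = M * ζ ^ ((n + 1 : ℕ) : ℤ) := by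
        rw [mul_left_comm, ← zpow_add₀ hζ₀.ne']
        congr 2
        push_cast
        ring

lemma norm_history_le_zpow_mul (hζ₀ : 0 < ζ) (hζ₁ : ζ ≤ 1)
    (hstep : ∀ (m : ℕ) i, |z i (m + 1)| ≤ ζ ^ (1 - r) * ‖history z r m‖) (m : ℕ) :
    ‖history z r m‖ ≤ ζ ^ r * ζ ^ m * ‖history z r 0‖ := by
  have hbound : ‖history z r m‖ ≤ ‖history z r 0‖ * ζ ^ ((m : ℤ) + r) := by
    refine norm_history_le (by positivity) fun i k hk₁ hk₂ => ?_
    calc |z i k| ≤ ‖history z r 0‖ * ζ ^ k :=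
          abs_le_mul_zpow_of_abs_succ_le hζ₀ hζ₁ hstep m i k (by omega) hk₂
      _ ≤ ‖history z r 0‖ * ζ ^ ((m : ℤ) + r) :=
          mul_le_mul_of_nonneg_left (zpow_le_zpow_right_of_le_one₀ hζ₀ hζ₁ hk₁) (norm_nonneg _)
  rw [zpow_add₀ hζ₀.ne', zpow_natCast] at hbound
  linarith

end History

lemma exists_mem_Ioo_forall_le_zpow {ι : Type*} [Finite ι] {q : ι → ℝ} (hq : ∀ i, q i < 1)
    (e : ℤ) : ∃ ζ ∈ Set.Ioo (0 : ℝ) 1, ∀ i, q i ≤ ζ ^ e := by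
  have hlim : Tendsto (fun ζ : ℝ => ζ ^ e) (𝓝[<] 1) (𝓝 1) := by
    simpa using ((continuousAt_zpow₀ (1 : ℝ) e (Or.inl one_ne_zero)).tendsto).mono_left
      nhdsWithin_le_nhds
  have hle : ∀ᶠ ζ in 𝓝[<] (1 : ℝ), ∀ i, q i ≤ ζ ^ e :=
    eventually_all.2 fun i => (hlim.eventually_const_lt (hq i)).mono fun _ h => h.le
  exact ((Filter.Eventually.and (Ioo_mem_nhdsLT one_pos) hle)).exists

lemma abs_sub_succ_le_of_recurrence {ι : Type*} [Fintype ι] {r : ℤ} {τ : ℕ} (hr : r ≤ -(τ : ℤ))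
    {c : ι → ℕ → ℝ} {cplus : ι → ℝ} (hcb : ∀ i m, |c i m| ≤ cplus i)
    {h : ι → ι → ℕ → (ι → Icc r (0 : ℤ) → ℝ) → ℝ} {H : ι → ι → ℝ}
    (hLip : ∀ i j m α β, |h i j m α - h i j m β| ≤ H i j * ‖α - β‖) {x y : ι → ℤ → ℝ}
    (hx : ∀ i (m : ℕ), x i (m + 1) = c i m * x i (m - τ) + ∑ j, h i j m (history x r m))
    (hy : ∀ i (m : ℕ), y i (m + 1) = c i m * y i (m - τ) + ∑ j, h i j m (history y r m))
    (m : ℕ) (i : ι) :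
    |(x - y) i (m + 1)| ≤ (cplus i + ∑ j, H i j) * ‖history (x - y) r m‖ := by
  set D := ‖history (x - y) r m‖
  have hdelay : |(x - y) i (m - τ)| ≤ D := abs_le_norm_history _ i (by omega) (by omega)
  have hrec : (x - y) i (m + 1) = c i m * (x - y) i (m - τ) +
      ∑ j, (h i j m (history x r m) - h i j m (history y r m)) := by
    simp only [Pi.sub_apply, hx, hy, sum_sub_distrib]
    ring
  calc |(x - y) i (m + 1)| ≤ |c i m| * |(x - y) i (m - τ)| +
        ∑ j, |h i j m (history x r m) - h i j m (history y r m)| := by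
        rw [hrec, ← abs_mul]
        exact (abs_add_le _ _).trans (add_le_add_right (abs_sum_le_sum_abs _ _) _)
    _ ≤ cplus i * D + ∑ j, H i j * D :=
        add_le_add (mul_le_mul (hcb i m) hdelay (abs_nonneg _) ((abs_nonneg _).trans (hcb i m)))
          (sum_le_sum fun j _ => hLip i j m _ _)
    _ = (cplus i + ∑ j, H i j) * D := by rw [← sum_mul, add_mul]

theorem neural_network_global_exponential_stability_general
    (N τ : ℕ) (r : ℤ) (hr : r ≤ -(τ : ℤ))
    (c : Fin N → ℕ → ℝ) (cplus : Fin N → ℝ)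
    (hcb : ∀ i m, |c i m| ≤ cplus i)
    (h : Fin N → Fin N → ℕ → (Fin N → (Finset.Icc r (0 : ℤ)) → ℝ) → ℝ)
    (H : Fin N → Fin N → ℝ)
    (hLip : ∀ i j (m : ℕ) (α β : Fin N → (Finset.Icc r (0 : ℤ)) → ℝ),
      |h i j m α - h i j m β| ≤ H i j * ‖α - β‖)
    (hmain : ∀ i, 1 - cplus i > ∑ j, H i j) :
    ∃ C : ℝ, 0 < C ∧ ∃ ζ ∈ Set.Ioo (0 : ℝ) 1,
      ∀ x y : Fin N → ℤ → ℝ,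
        (∀ i, ∀ m : ℕ, x i ((m : ℤ) + 1) = c i m * x i ((m : ℤ) - τ) +
          ∑ j, h i j m (fun i' (j' : (Finset.Icc r (0 : ℤ))) =>
            x i' ((m : ℤ) + (j' : ℤ)))) →
        (∀ i, ∀ m : ℕ, y i ((m : ℤ) + 1) = c i m * y i ((m : ℤ) - τ) +
          ∑ j, h i j m (fun i' (j' : (Finset.Icc r (0 : ℤ))) =>
            y i' ((m : ℤ) + (j' : ℤ)))) →
        ∀ m : ℕ,
          ‖(fun i (j : (Finset.Icc r (0 : ℤ))) => x i ((m : ℤ) + (j : ℤ))) -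
              (fun i (j : (Finset.Icc r (0 : ℤ))) => y i ((m : ℤ) + (j : ℤ)))‖ ≤
            C * ζ ^ m *
              ‖(fun i (j : (Finset.Icc r (0 : ℤ))) => x i (j : ℤ)) -
                  (fun i (j : (Finset.Icc r (0 : ℤ))) => y i (j : ℤ))‖ := by
  obtain ⟨ζ, ⟨hζ₀, hζ₁⟩, hζ⟩ := exists_mem_Ioo_forall_le_zpow
    (q := fun i => cplus i + ∑ j, H i j) (fun i => by linarith [hmain i]) (1 - r)
  refine ⟨ζ ^ r, zpow_pos hζ₀ r, ζ, ⟨hζ₀, hζ₁⟩, fun x y hx hy m => ?_⟩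
  have hstep (m : ℕ) (i : Fin N) :
      |(x - y) i (m + 1)| ≤ ζ ^ (1 - r) * ‖history (x - y) r m‖ :=
    (abs_sub_succ_le_of_recurrence hr hcb hLip hx hy m i).trans
      (mul_le_mul_of_nonneg_right (hζ i) (norm_nonneg _))
  have hdecay := norm_history_le_zpow_mul hζ₀ hζ₁.le hstep m
  rwa [history_zero] at hdecay

/-- Theorem 4.1 of the paper: the generalized neural network
model `x_i(m+1) = c_i(m) x_i(m-τ) + Σ_j h_{ij}(m, x̄_m)` is globally
exponentially stable when `1 - c_i⁺ > Σ_j H_{ij}` for all `i`. -/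
theorem neural_network_global_exponential_stability
    (N τ : ℕ) (r : ℤ) (hr : r ≤ -(τ : ℤ))
    (c : Fin N → ℕ → ℝ) (cplus : Fin N → ℝ)
    (hcb : ∀ i m, |c i m| ≤ cplus i) (hc1 : ∀ i, cplus i < 1)
    (h : Fin N → Fin N → ℕ → (Fin N → (Finset.Icc r (0 : ℤ)) → ℝ) → ℝ)
    (H : Fin N → Fin N → ℝ) (hH : ∀ i j, 0 ≤ H i j)
    (hLip : ∀ i j (m : ℕ) (α β : Fin N → (Finset.Icc r (0 : ℤ)) → ℝ),
      |h i j m α - h i j m β| ≤ H i j * ‖α - β‖)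
    (hmain : ∀ i, 1 - cplus i > ∑ j, H i j) :
    ∃ C : ℝ, 0 < C ∧ ∃ ζ ∈ Set.Ioo (0 : ℝ) 1,
      ∀ x y : Fin N → ℤ → ℝ,
        (∀ i, ∀ m : ℕ, x i ((m : ℤ) + 1) = c i m * x i ((m : ℤ) - τ) +
          ∑ j, h i j m (fun i' (j' : (Finset.Icc r (0 : ℤ))) =>
            x i' ((m : ℤ) + (j' : ℤ)))) →
        (∀ i, ∀ m : ℕ, y i ((m : ℤ) + 1) = c i m * y i ((m : ℤ) - τ) +
          ∑ j, h i j m (fun i' (j' : (Finset.Icc r (0 : ℤ))) =>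
            y i' ((m : ℤ) + (j' : ℤ)))) →
        ∀ m : ℕ,
          ‖(fun i (j : (Finset.Icc r (0 : ℤ))) => x i ((m : ℤ) + (j : ℤ))) -
              (fun i (j : (Finset.Icc r (0 : ℤ))) => y i ((m : ℤ) + (j : ℤ)))‖ ≤
            C * ζ ^ m *
              ‖(fun i (j : (Finset.Icc r (0 : ℤ))) => x i (j : ℤ)) -
                  (fun i (j : (Finset.Icc r (0 : ℤ))) => y i (j : ℤ))‖ :=
  neural_network_global_exponential_stability_general N τ r hr c cplus hcb h H hLip hmain
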